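/- Let u be a continuous real-valued function on the punctured unit disc {z ∈ ℂ : 0 < |z| < 1} that is bounded above and satisfies the sub-mean value inequality on the punctured unit disc. Then for every real number L such that u(z) ≥ L for points z arbitrarily close to 0 (i.e. frequently along the punctured neighborhood filter of 0), and for every r with 0 < r < 1, one has L ≤ (1/(2π)) ∫₀^{2π} u(r e^{iθ}) dθ. -/

import Mathlib

/-!
Fix `ε > 0`. A trigonometric polynomial approximating `u` on the circle `|z| = r` is, on that
circle, the real part of an entire function `g`, so `|u - Re g| < ε` there. The function
`u - Re g` is again sub-mean-value and bounded above on the punctured disc `0 < |z| ≤ r`;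
adding `b log (|z| / r)` with `b > 0` makes it tend to `-∞` at the puncture, so the maximum
principle on thin annuli gives `u - Re g + b log (|z| / r) ≤ ε`, and letting `b → 0`,
`u ≤ Re g + ε` on the punctured disc. As `u ≥ L` at points arbitrarily close to `0`,
continuity of `g` gives `L ≤ Re g(0) + ε`, and by the mean value property `Re g(0)` is the
circle average of `Re g`, which is at most that of `u` plus `ε`.
-/

open Complex Real Filter

/-- A function `u` satisfies the sub-mean value inequality on an open set `U ⊆ ℂ` if for
every closed disc contained in `U`, the value at the center is at most the average of the
values on the boundary circle. -/
def SubMeanValueOn (u : ℂ → ℝ) (U : Set ℂ) : Prop :=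
  ∀ c : ℂ, ∀ r : ℝ, 0 < r → Metric.closedBall c r ⊆ U →
    u c ≤ (1 / (2 * Real.pi)) *
      ∫ θ in (0:ℝ)..(2 * Real.pi), u (c + r * Complex.exp (θ * Complex.I))

open Metric Set InnerProductSpace Topology ComplexConjugate

lemma one_div_two_pi_mul_integral_eq_circleAverage (f : ℂ → ℝ) (c : ℂ) (R : ℝ) :
    (1 / (2 * π)) * ∫ θ in (0:ℝ)..(2 * π), f (c + R * exp (θ * I)) =
      circleAverage f c R := by
  rw [circleAverage_def, smul_eq_mul, one_div]
  rfl

lemma le_add_of_frequently_le_of_eventually_le {α : Type*} {l : Filter α} {u v : α → ℝ}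
    {L M a : ℝ} (hL : ∃ᶠ x in l, L ≤ u x) (huv : ∀ᶠ x in l, u x ≤ v x + M)
    (hv : Tendsto v l (𝓝 a)) : L ≤ a + M := by
  have : L - M ≤ a := isClosed_Ici.mem_of_frequently_of_tendsto
    (hL.mp (huv.mono fun x hx hLx => show L - M ≤ v x by linarith)) hv
  linarith

lemma circleAverage_lt_of_forall_le_of_exists_lt {f : ℂ → ℝ} {c : ℂ} {R a : ℝ}
    (hf : ContinuousOn f (sphere c |R|)) (hle : ∀ z ∈ sphere c |R|, f z ≤ a)
    (hlt : ∃ z ∈ sphere c |R|, f z < a) : circleAverage f c R < a := by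
  obtain ⟨_, ⟨θ, rfl⟩, hθ⟩ := (range_circleMap c R).symm ▸ hlt
  obtain ⟨θ', hθ', hθθ'⟩ := (periodic_circleMap c R).exists_mem_Ico₀ two_pi_pos θ
  have hfc : ContinuousOn (fun θ => f (circleMap c R θ)) (Icc 0 (2 * π)) :=
    (hf.comp_continuous (continuous_circleMap c R) (circleMap_mem_sphere' c R)).continuousOn
  rw [circleAverage_def, smul_eq_mul, inv_mul_lt_iff₀ two_pi_pos]
  calc ∫ θ in (0:ℝ)..2 * π, f (circleMap c R θ)
      < ∫ _ in (0:ℝ)..2 * π, a :=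
        intervalIntegral.integral_lt_integral_of_continuousOn_of_le_of_exists_lt two_pi_pos
          hfc continuousOn_const (fun θ _ => hle _ (circleMap_mem_sphere' c R θ))
          ⟨θ', Ico_subset_Icc_self hθ', hθθ' ▸ hθ⟩
    _ = 2 * π * a := by simp

theorem HarmonicOnNhd.le_circleAverage_add {h f : ℂ → ℝ} {c : ℂ} {R M : ℝ}
    (hh : HarmonicOnNhd h (closedBall c |R|)) (hf : CircleIntegrable f c R)
    (hM : ∀ z ∈ sphere c |R|, h z ≤ f z + M) : h c ≤ circleAverage f c R + M := by
  have hh_int : CircleIntegrable h c R :=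
    (hh.contDiffOn.continuousOn.mono sphere_subset_closedBall).circleIntegrable'
  have := circleAverage_mono_on_of_le_circle (hh_int.sub hf) (a := M) fun z hz => by
    simp only [Pi.sub_apply]
    linarith [hM z hz]
  rw [circleAverage_sub hh_int hf, hh.circleAverage_eq] at this
  linarith

lemma frontier_closedBall_diff_ball_subset {E : Type*} [NormedAddCommGroup E] [NormedSpace ℝ E]
    [Nontrivial E] (c : E) (r : ℝ) {δ : ℝ} (hδ : δ ≠ 0) :
    frontier (closedBall c r \ ball c δ) ⊆ sphere c r ∪ sphere c δ := by
  rw [sdiff_eq]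
  refine (frontier_inter_subset _ _).trans ?_
  rw [frontier_compl, frontier_closedBall', frontier_ball c hδ]
  exact union_subset_union inter_subset_left inter_subset_right

lemma harmonicOnNhd_log_norm_div {r : ℝ} (hr : r ≠ 0) :
    HarmonicOnNhd (fun z : ℂ => Real.log ‖z / r‖) {0}ᶜ := fun _ hz =>
  analyticAt_id.div_const.harmonicAt_log_norm (div_ne_zero hz (ofReal_ne_zero.mpr hr))

lemma circleMap_sub_center_div {r : ℝ} (hr : r ≠ 0) (c : ℂ) (θ : ℝ) :
    (circleMap c r θ - c) / r = exp (θ * I) := by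
  rw [circleMap_sub_center, circleMap_zero, mul_div_cancel_left₀ _ (ofReal_ne_zero.mpr hr)]

lemma fourier_coe_two_pi_apply (n : ℤ) (θ : ℝ) :
    fourier n (θ : AddCircle (2 * π)) = exp (θ * I) ^ n := by
  rw [fourier_coe_apply, ← exp_int_mul]
  congr 1
  field_simp
  push_cast
  ring

/-- On the circle, `e^{inθ}` is `((z - c) / r)ⁿ` for `n ≥ 0` and its conjugate for `n < 0`. -/
lemma exists_differentiable_eq_add_conj_of_mem_span_fourier {c : ℂ} {r : ℝ} (hr : r ≠ 0)
    {P : C(AddCircle (2 * π), ℂ)} (hP : P ∈ Submodule.span ℂ (range (fourier (T := 2 * π)))) :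
    ∃ g₁ g₂ : ℂ → ℂ, Differentiable ℂ g₁ ∧ Differentiable ℂ g₂ ∧
      ∀ θ : ℝ, P θ = g₁ (circleMap c r θ) + conj (g₂ (circleMap c r θ)) := by
  induction hP using Submodule.span_induction with
  | mem _ hP =>
    obtain ⟨n, rfl⟩ := hP
    have hpow : Differentiable ℂ fun z : ℂ => ((z - c) / r) ^ n.natAbs := by fun_prop
    obtain ⟨m, rfl | rfl⟩ := n.eq_nat_or_neg
    · refine ⟨_, 0, hpow, differentiable_const 0, fun θ => ?_⟩
      rw [fourier_coe_two_pi_apply, ← circleMap_sub_center_div hr c θ]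
      simp
    · refine ⟨0, _, differentiable_const 0, hpow, fun θ => ?_⟩
      rw [fourier_coe_two_pi_apply, circleMap_sub_center_div hr c θ]
      simp [← exp_conj, Complex.exp_neg]
  | zero => exact ⟨0, 0, differentiable_const 0, differentiable_const 0, fun θ => by simp⟩
  | add P Q _ _ hP hQ =>
    obtain ⟨g₁, g₂, hg₁, hg₂, hP⟩ := hP
    obtain ⟨h₁, h₂, hh₁, hh₂, hQ⟩ := hQ
    exact ⟨g₁ + h₁, g₂ + h₂, hg₁.add hh₁, hg₂.add hh₂, fun θ => by
      simp only [ContinuousMap.add_apply, hP, hQ, Pi.add_apply, map_add]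
      ring⟩
  | smul a P _ hP =>
    obtain ⟨g₁, g₂, hg₁, hg₂, hP⟩ := hP
    refine ⟨a • g₁, conj a • g₂, hg₁.const_smul a, hg₂.const_smul _, fun θ => ?_⟩
    simp only [ContinuousMap.coe_smul, Pi.smul_apply, hP, smul_eq_mul, map_mul,
      RingHomCompTriple.comp_apply, RingHom.id_apply]
    ring

theorem exists_differentiable_abs_sub_re_lt {f : ℂ → ℝ} {c : ℂ} {r : ℝ} (hr : 0 < r)
    (hf : ContinuousOn f (sphere c r)) {ε : ℝ} (hε : 0 < ε) :
    ∃ g : ℂ → ℂ, Differentiable ℂ g ∧ ∀ z ∈ sphere c r, |f z - (g z).re| < ε := by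
  have : Fact (0 < 2 * π) := ⟨two_pi_pos⟩
  have hsphere : ∀ θ, circleMap c r θ ∈ sphere c r := circleMap_mem_sphere c hr.le
  have hper : Function.Periodic (fun θ => (f (circleMap c r θ) : ℂ)) (2 * π) :=
    (periodic_circleMap c r).comp fun z => (f z : ℂ)
  let F : C(AddCircle (2 * π), ℂ) := ⟨hper.lift, continuous_coinduced_dom.mpr
    (continuous_ofReal.comp (hf.comp_continuous (continuous_circleMap c r) hsphere))⟩
  have hF : F ∈ closure (Submodule.span ℂ (range (fourier (T := 2 * π))) : Set _) := by
    rw [← Submodule.topologicalClosure_coe, span_fourier_closure_eq_top]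
    trivial
  obtain ⟨P, hP, hFP⟩ := Metric.mem_closure_iff.mp hF ε hε
  obtain ⟨g₁, g₂, hg₁, hg₂, hPg⟩ :=
    exists_differentiable_eq_add_conj_of_mem_span_fourier (c := c) hr.ne' hP
  refine ⟨g₁ + g₂, hg₁.add hg₂, ?_⟩
  rintro _ hz
  obtain ⟨θ, rfl⟩ : ∃ θ, circleMap c r θ = _ := by
    rwa [← mem_range, range_circleMap, abs_of_pos hr]
  calc |f (circleMap c r θ) - ((g₁ + g₂) (circleMap c r θ)).re|
      = |(F θ - P θ).re| := by simp [F, hPg, hper.lift_coe]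
    _ ≤ ‖F θ - P θ‖ := abs_re_le_norm _
    _ < ε := (dist_eq_norm (F θ) (P θ) ▸ ContinuousMap.dist_apply_le_dist _).trans_lt hFP

namespace SubMeanValueOn

variable {u : ℂ → ℝ} {U V K : Set ℂ} {r C M : ℝ}

lemma le_circleAverage (hu : SubMeanValueOn u U) {c : ℂ} {R : ℝ} (hR : 0 < R)
    (hcR : closedBall c R ⊆ U) : u c ≤ circleAverage u c R := by
  simpa only [one_div_two_pi_mul_integral_eq_circleAverage] using hu c R hR hcR

lemma mono (hu : SubMeanValueOn u U) (hVU : V ⊆ U) : SubMeanValueOn u V :=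
  fun c R hR hcR => hu c R hR (hcR.trans hVU)

lemma add_harmonicOnNhd {h : ℂ → ℝ} (hu : SubMeanValueOn u U) (huc : ContinuousOn u U)
    (hh : HarmonicOnNhd h U) : SubMeanValueOn (u + h) U := by
  intro c R hR hcR
  have hcR' : closedBall c |R| ⊆ U := by rwa [abs_of_pos hR]
  have hsphere : sphere c |R| ⊆ U := sphere_subset_closedBall.trans hcR'
  rw [one_div_two_pi_mul_integral_eq_circleAverage,
    circleAverage_add ((huc.mono hsphere).circleIntegrable')
      ((hh.contDiffOn.continuousOn.mono hsphere).circleIntegrable'),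
    (hh.mono hcR').circleAverage_eq]
  exact add_le_add_left (hu.le_circleAverage hR hcR) _

theorem le_of_forall_frontier_le (hK : IsCompact K) (huc : ContinuousOn u K)
    (hu : SubMeanValueOn u (interior K)) (hM : ∀ z ∈ frontier K, u z ≤ M) :
    ∀ z ∈ K, u z ≤ M := by
  rcases K.eq_empty_or_nonempty with rfl | hne
  · simp
  obtain ⟨z₀, hz₀, hmax⟩ := hK.exists_isMaxOn hne huc
  -- Among the maximizers of `u`, one with largest real part cannot be an interior point:
  -- the circle average around it would be strictly smaller than its value.
  have hS : IsCompact (K ∩ u ⁻¹' {u z₀}) :=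
    hK.of_isClosed_subset (huc.preimage_isClosed_of_isClosed hK.isClosed isClosed_singleton)
      inter_subset_left
  obtain ⟨z₁, ⟨hz₁K, hz₁max⟩, hz₁re⟩ :=
    hS.exists_isMaxOn ⟨z₀, hz₀, rfl⟩ continuous_re.continuousOn
  suffices z₁ ∈ frontier K from fun z hz => (hmax hz).trans (hz₁max ▸ hM z₁ this)
  by_contra hfr
  have hint : z₁ ∈ interior K := by
    by_contra h
    exact hfr ⟨subset_closure hz₁K, h⟩
  obtain ⟨ρ, hρ, hball⟩ := Metric.isOpen_iff.mp isOpen_interior z₁ hint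
  have hρ2 : 0 < ρ / 2 := half_pos hρ
  have hsub : closedBall z₁ (ρ / 2) ⊆ interior K :=
    (closedBall_subset_ball (half_lt_self hρ)).trans hball
  have hsphere : sphere z₁ |ρ / 2| ⊆ K := by
    rw [abs_of_pos hρ2]
    exact sphere_subset_closedBall.trans (hsub.trans interior_subset)
  set p : ℂ := z₁ + (ρ / 2 : ℝ)
  have hp : p ∈ sphere z₁ |ρ / 2| := by simp [p, abs_div]
  have hup : u p < u z₁ := by
    refine (hz₁max ▸ hmax (hsphere hp) : u p ≤ u z₁).lt_of_ne fun hup => ?_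
    have : p.re ≤ z₁.re := hz₁re ⟨hsphere hp, hup.trans hz₁max⟩
    simp only [p, add_re, ofReal_re] at this
    linarith
  have hlt : circleAverage u z₁ (ρ / 2) < u z₁ :=
    circleAverage_lt_of_forall_le_of_exists_lt (huc.mono hsphere)
      (fun z hz => hz₁max ▸ hmax (hsphere hz)) ⟨p, hp, hup⟩
  exact hlt.not_ge (hu.le_circleAverage hρ2 hsub)

theorem add_mul_log_norm_div_le (hu : SubMeanValueOn u (closedBall 0 r \ {0}))
    (huc : ContinuousOn u (closedBall 0 r \ {0})) (hC : ∀ z ∈ closedBall 0 r \ {0}, u z ≤ C)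
    (hM : ∀ z ∈ sphere 0 r, u z ≤ M) {b : ℝ} (hb : 0 < b) :
    ∀ z ∈ closedBall 0 r \ {0}, u z + b * Real.log ‖z / r‖ ≤ M := by
  intro z₀ hz₀
  have hz₀pos : 0 < ‖z₀‖ := norm_pos_iff.mpr hz₀.2
  have hr : 0 < r := hz₀pos.trans_le (mem_closedBall_zero_iff.mp hz₀.1)
  have hnorm (z : ℂ) : ‖z / r‖ = ‖z‖ / r := by
    rw [norm_div, norm_real, Real.norm_of_nonneg hr.le]
  set h : ℂ → ℝ := b • fun z : ℂ => Real.log ‖z / r‖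
  have hh : HarmonicOnNhd h (closedBall 0 r \ {0}) :=
    ((harmonicOnNhd_log_norm_div hr.ne').const_smul).mono fun z hz => hz.2
  -- As `log ‖z / r‖ → -∞` at `0`, on a small inner circle `u + h ≤ C + b log (δ / r) ≤ M`.
  set δ := min ‖z₀‖ (r * Real.exp ((M - C) / b))
  have hδ : 0 < δ := lt_min hz₀pos (by positivity)
  have hlogδ : b * Real.log (δ / r) ≤ M - C := by
    refine (le_div_iff₀' hb).mp ((Real.log_le_iff_le_exp (by positivity)).mpr ?_)
    exact (div_le_iff₀' hr).mpr (min_le_right _ _)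
  set K := closedBall (0 : ℂ) r \ ball 0 δ
  have hKsub : K ⊆ closedBall 0 r \ {0} := fun z hz =>
    ⟨hz.1, fun h0 => hz.2 (by simp [mem_singleton_iff.mp h0, hδ])⟩
  have hK : IsCompact K := (isCompact_closedBall 0 r).diff isOpen_ball
  show (u + h) z₀ ≤ M
  refine (hu.add_harmonicOnNhd huc hh).mono (interior_subset.trans hKsub)
    |>.le_of_forall_frontier_le hK ((huc.add hh.contDiffOn.continuousOn).mono hKsub) ?_ z₀
    ⟨hz₀.1, by simp [δ]⟩
  intro z hz
  show u z + b * Real.log ‖z / r‖ ≤ M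
  rcases frontier_closedBall_diff_ball_subset 0 r hδ.ne' hz with hzr | hzδ
  · rw [hnorm, mem_sphere_zero_iff_norm.mp hzr, div_self hr.ne', Real.log_one, mul_zero,
      add_zero]
    exact hM z hzr
  · rw [hnorm, mem_sphere_zero_iff_norm.mp hzδ]
    linarith [hC z (hKsub (hK.isClosed.frontier_subset hz))]

theorem le_of_forall_sphere_le_of_bddAbove (hu : SubMeanValueOn u (closedBall 0 r \ {0}))
    (huc : ContinuousOn u (closedBall 0 r \ {0})) (hb : BddAbove (u '' (closedBall 0 r \ {0})))
    (hM : ∀ z ∈ sphere 0 r, u z ≤ M) : ∀ z ∈ closedBall 0 r \ {0}, u z ≤ M := by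
  intro z hz
  obtain ⟨C, hC⟩ := hb
  have hlim : Tendsto (fun b => u z + b * Real.log ‖z / r‖) (𝓝[>] 0) (𝓝 (u z)) := by
    refine tendsto_nhdsWithin_of_tendsto_nhds ?_
    convert (continuous_const.add (continuous_id.mul continuous_const)).tendsto
      (f := fun b => u z + b * Real.log ‖z / r‖) 0 using 2
    simp
  exact le_of_tendsto hlim <| eventually_nhdsWithin_of_forall fun b hb =>
    add_mul_log_norm_div_le hu huc (fun z hz => hC ⟨z, hz, rfl⟩) hM hb z hz

theorem sub_re_le_of_forall_sphere_le {g : ℂ → ℂ}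
    (hu : SubMeanValueOn u (closedBall 0 r \ {0})) (huc : ContinuousOn u (closedBall 0 r \ {0}))
    (hb : BddAbove (u '' (closedBall 0 r \ {0}))) (hg : Differentiable ℂ g)
    (hM : ∀ z ∈ sphere 0 r, u z - (g z).re ≤ M) :
    ∀ z ∈ closedBall 0 r \ {0}, u z - (g z).re ≤ M := by
  have hneg : HarmonicOnNhd (-fun z => (g z).re) univ :=
    fun z _ => (hg.analyticAt z).harmonicAt_re.neg
  have hneg_bdd := (isCompact_closedBall (0 : ℂ) r).bddAbove_image
    (hneg.contDiffOn.continuousOn.mono (subset_univ _))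
  have hbdd : BddAbove ((u + -fun z => (g z).re) '' (closedBall 0 r \ {0})) := by
    refine (hb.add (hneg_bdd.mono (image_mono (sdiff_subset (t := {0}))))).mono ?_
    rintro _ ⟨z, hz, rfl⟩
    exact add_mem_add ⟨z, hz, rfl⟩ ⟨z, hz, rfl⟩
  simpa only [Pi.add_apply, Pi.neg_apply, ← sub_eq_add_neg] using
    (hu.add_harmonicOnNhd huc (hneg.mono (subset_univ _))).le_of_forall_sphere_le_of_bddAbove
      (huc.add (hneg.contDiffOn.continuousOn.mono (subset_univ _))) hbdd hM

end SubMeanValueOn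

/-- Grauert–Remmert type extension in one variable: if `u` is continuous, bounded above
and satisfies the sub-mean value inequality on the punctured unit disc, and `u ≥ L`
frequently near the puncture, then `L` is at most the circle average of `u` on any circle
of radius `r ∈ (0,1)` around the origin. -/
theorem le_circle_average_of_frequently_ge
    (u : ℂ → ℝ)
    (hc : ContinuousOn u {z : ℂ | 0 < ‖z‖ ∧ ‖z‖ < 1})
    (hb : BddAbove (u '' {z : ℂ | 0 < ‖z‖ ∧ ‖z‖ < 1}))
    (hsm : SubMeanValueOn u {z : ℂ | 0 < ‖z‖ ∧ ‖z‖ < 1})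
    (L : ℝ) (hL : ∃ᶠ z in nhdsWithin (0 : ℂ) {(0 : ℂ)}ᶜ, L ≤ u z)
    (r : ℝ) (hr : 0 < r) (hr1 : r < 1) :
    L ≤ (1 / (2 * Real.pi)) *
      ∫ θ in (0:ℝ)..(2 * Real.pi), u (r * Complex.exp (θ * Complex.I)) := by
  set D := closedBall (0 : ℂ) r \ {0}
  have hD : D ⊆ {z : ℂ | 0 < ‖z‖ ∧ ‖z‖ < 1} := fun z hz =>
    ⟨norm_pos_iff.mpr hz.2, (mem_closedBall_zero_iff.mp hz.1).trans_lt hr1⟩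
  have hucS : ContinuousOn u (sphere 0 r) :=
    hc.mono fun z hz => hD ⟨sphere_subset_closedBall hz, ne_of_mem_sphere hz hr.ne'⟩
  have hmean := one_div_two_pi_mul_integral_eq_circleAverage u 0 r
  simp only [zero_add] at hmean
  rw [hmean]
  refine le_of_forall_pos_le_add fun ε hε => ?_
  obtain ⟨g, hg, hgu⟩ := exists_differentiable_abs_sub_re_lt hr hucS (half_pos hε)
  have hw : ∀ z ∈ D, u z - (g z).re ≤ ε / 2 :=
    (hsm.mono hD).sub_re_le_of_forall_sphere_le (hc.mono hD) (hb.mono (image_mono hD)) hg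
      fun z hz => (le_abs_self _).trans (hgu z hz).le
  have hLg : L ≤ (g 0).re + ε / 2 :=
    le_add_of_frequently_le_of_eventually_le hL
      (mem_of_superset (inter_mem_nhdsWithin _ (closedBall_mem_nhds 0 hr)) fun z hz =>
        show u z ≤ (g z).re + ε / 2 by linarith [hw z ⟨hz.2, hz.1⟩])
      (((continuous_re.comp hg.continuous).tendsto 0).mono_left nhdsWithin_le_nhds)
  have hg0 : (g 0).re ≤ circleAverage u 0 r + ε / 2 :=
    HarmonicOnNhd.le_circleAverage_add (fun z _ => (hg.analyticAt z).harmonicAt_re)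
      (hucS.circleIntegrable hr.le) fun z hz => by
        rw [abs_of_pos hr] at hz
        linarith [neg_abs_le (u z - (g z).re), hgu z hz]
  linarith
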